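/- Let u = (u_n) ∈ {0,2,−2}^ℕ be a sequence whose first nonzero entry is not −2 and which does not end with 2(−2)^∞ or (−2)2^∞ (i.e. u ∈ Θ). Let a = (a_n) ∈ {0,2}^ℕ. For a fixed index n ≥ 2, if (a_k + u_k) ∈ {0,2} for all k < n and (a_n, u_n) = (0, −2), then Σ_{k=n}^∞ (a_k + u_k) 3^{-k} ∈ [−3^{-(n−1)}, 0). Similarly, if (a_k + u_k) ∈ {0,2} for all k < n and (a_n, u_n) = (2, 2), then Σ_{k=n}^∞ (a_k + u_k) 3^{-k} ∈ (3^{-(n−1)}, 2·3^{-(n−1)}]. -/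

import Mathlib

lemma summable_aux (N : ℕ) (c : ℝ) :
    Summable (fun j : ℕ => c / 3 ^ (N + j + 1)) := by
  have h : (fun j : ℕ => c / 3 ^ (N + j + 1)) =
      fun j : ℕ => (c / 3 ^ (N + 1)) * (1/3 : ℝ) ^ j := by
    funext j
    rw [show N + j + 1 = (N + 1) + j by ring, pow_add]
    rw [div_pow, one_pow]
    field_simp
  rw [h]
  exact (summable_geometric_of_lt_one (by norm_num) (by norm_num)).mul_left _

lemma tsum_aux (N : ℕ) (c : ℝ) :
    (∑' j : ℕ, c / 3 ^ (N + j + 1)) = c / (2 * 3 ^ N) := by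
  have h : (fun j : ℕ => c / 3 ^ (N + j + 1)) =
      fun j : ℕ => (c / 3 ^ (N + 1)) * (1/3 : ℝ) ^ j := by
    funext j
    rw [show N + j + 1 = (N + 1) + j by ring, pow_add]
    rw [div_pow, one_pow]
    field_simp
  rw [h, tsum_mul_left, tsum_geometric_of_lt_one (by norm_num) (by norm_num)]
  rw [pow_succ]
  field_simp
  ring

lemma key_bounds (N : ℕ) (b : ℕ → ℝ) (hb : ∀ j, -2 ≤ b j ∧ b j ≤ 4)
    (t : ℕ) (ht : t ≠ 0) :
    (b 0 = -2 → b t ≤ 2 →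
      (∑' j : ℕ, b j / 3 ^ (N + j + 1)) ∈ Set.Ico (-((3 : ℝ) ^ N)⁻¹) 0) ∧
    (b 0 = 4 → 0 ≤ b t →
      (∑' j : ℕ, b j / 3 ^ (N + j + 1)) ∈
        Set.Ioc ((3 : ℝ) ^ N)⁻¹ (2 * ((3 : ℝ) ^ N)⁻¹)) := by
  have h3N : (0:ℝ) < 3 ^ N := by positivity
  have h3t : (0:ℝ) < 3 ^ (N + t + 1) := by positivity
  have h3N1 : (3:ℝ) ^ (N + 1) = 3 ^ N * 3 := pow_succ 3 N
  have hs : Summable (fun j : ℕ => b j / 3 ^ (N + j + 1)) := by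
    apply Summable.of_norm_bounded (summable_aux N 4)
    intro j
    have hp : (0:ℝ) < 3 ^ (N + j + 1) := by positivity
    rw [Real.norm_eq_abs, abs_div, abs_of_pos hp]
    gcongr
    exact abs_le.2 ⟨by linarith [(hb j).1], (hb j).2⟩
  set S := ∑' j : ℕ, b j / 3 ^ (N + j + 1) with hS
  -- difference to upper envelope
  have hdnn : ∀ j : ℕ, 0 ≤ 4 / 3 ^ (N + j + 1) - b j / 3 ^ (N + j + 1) := by
    intro j
    have hp : (0:ℝ) < 3 ^ (N + j + 1) := by positivity
    rw [sub_nonneg]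
    gcongr
    exact (hb j).2
  have hdsum : Summable (fun j : ℕ => 4 / 3 ^ (N + j + 1) - b j / 3 ^ (N + j + 1)) :=
    (summable_aux N 4).sub hs
  have hdt : (∑' j : ℕ, (4 / 3 ^ (N + j + 1) - b j / 3 ^ (N + j + 1)))
      = 2 / 3 ^ N - S := by
    rw [Summable.tsum_sub (summable_aux N 4) hs, tsum_aux, ← hS]
    ring_nf
  -- difference to lower envelope
  have henn : ∀ j : ℕ, 0 ≤ b j / 3 ^ (N + j + 1) + 2 / 3 ^ (N + j + 1) := by
    intro j
    have hp : (0:ℝ) < 3 ^ (N + j + 1) := by positivity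
    have : (-2:ℝ) / 3 ^ (N + j + 1) ≤ b j / 3 ^ (N + j + 1) := by
      gcongr; exact (hb j).1
    have h2 : (-2:ℝ) / 3 ^ (N + j + 1) + 2 / 3 ^ (N + j + 1) = 0 := by ring
    linarith
  have hesum : Summable (fun j : ℕ => b j / 3 ^ (N + j + 1) + 2 / 3 ^ (N + j + 1)) :=
    hs.add (summable_aux N 2)
  have het : (∑' j : ℕ, (b j / 3 ^ (N + j + 1) + 2 / 3 ^ (N + j + 1)))
      = S + 1 / 3 ^ N := by
    rw [Summable.tsum_add hs (summable_aux N 2), tsum_aux, ← hS,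
      show (2:ℝ)/(2*3^N) = 1/3^N by rw [div_eq_div_iff (by positivity) (by positivity)]; ring]
  have hpair : ({0, t} : Finset ℕ).Nonempty := ⟨0, by simp⟩
  constructor
  · rintro hb0 hbt
    constructor
    · -- lower bound
      have := tsum_nonneg (L := SummationFilter.unconditional ℕ) henn
      rw [het] at this
      rw [neg_le, ← one_div]
      linarith
    · -- strict upper bound
      have hsum2 : (4 / 3 ^ (N + 0 + 1) - b 0 / 3 ^ (N + 0 + 1))
          + (4 / 3 ^ (N + t + 1) - b t / 3 ^ (N + t + 1))
          ≤ 2 / 3 ^ N - S := by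
        have h2 := Summable.sum_le_tsum ({0, t} : Finset ℕ) (fun i _ => hdnn i) hdsum
        rw [Finset.sum_pair (Ne.symm ht), hdt] at h2
        exact h2
      have h0 : (4:ℝ) / 3 ^ (N + 0 + 1) - b 0 / 3 ^ (N + 0 + 1) = 2 / 3 ^ N := by
        rw [hb0, show N + 0 + 1 = N + 1 from rfl, h3N1]
        field_simp
        ring
      have ht2 : (2:ℝ) / 3 ^ (N + t + 1)
          ≤ 4 / 3 ^ (N + t + 1) - b t / 3 ^ (N + t + 1) := by
        rw [div_sub_div_same, ← sub_div] at *
        gcongr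
        linarith
      have hq : (0:ℝ) < 2 / 3 ^ (N + t + 1) := by positivity
      linarith
  · rintro hb0 hbt
    constructor
    · -- strict lower bound
      have hsum2 : (b 0 / 3 ^ (N + 0 + 1) + 2 / 3 ^ (N + 0 + 1))
          + (b t / 3 ^ (N + t + 1) + 2 / 3 ^ (N + t + 1))
          ≤ S + 1 / 3 ^ N := by
        have h2 := Summable.sum_le_tsum ({0, t} : Finset ℕ) (fun i _ => henn i) hesum
        rw [Finset.sum_pair (Ne.symm ht), het] at h2
        exact h2
      have h0 : b 0 / 3 ^ (N + 0 + 1) + 2 / 3 ^ (N + 0 + 1) = 2 / 3 ^ N := by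
        rw [hb0, show N + 0 + 1 = N + 1 from rfl, h3N1]
        field_simp
        ring
      have ht2 : (2:ℝ) / 3 ^ (N + t + 1)
          ≤ b t / 3 ^ (N + t + 1) + 2 / 3 ^ (N + t + 1) := by
        have : (0:ℝ) ≤ b t / 3 ^ (N + t + 1) := by positivity
        linarith
      have hq : (0:ℝ) < 2 / 3 ^ (N + t + 1) := by positivity
      rw [← one_div]
      linarith [show (2:ℝ)/3^N = 2*(1/3^N) by ring]
    · -- upper bound
      have := tsum_nonneg (L := SummationFilter.unconditional ℕ) hdnn
      rw [hdt] at this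
      have : S ≤ 2 / 3 ^ N := by linarith
      rw [show 2 * ((3:ℝ) ^ N)⁻¹ = 2 / 3 ^ N by ring]
      exact this

/-- Membership in Θ: values in {0,2,-2}, the first nonzero entry is not -2,
and the sequence does not end with 2(-2)^∞ or (-2)2^∞. -/
def inTheta (u : ℕ → ℝ) : Prop :=
  (∀ n, u n = 0 ∨ u n = 2 ∨ u n = -2) ∧
  (∀ n, (∀ k < n, u k = 0) → u n ≠ -2) ∧
  (¬ ∃ k, u k = 2 ∧ ∀ j > k, u j = -2) ∧
  (¬ ∃ k, u k = -2 ∧ ∀ j > k, u j = 2)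

theorem stmt_19 (a u : ℕ → ℝ)
    (ha : ∀ n, a n = 0 ∨ a n = 2)
    (hu : inTheta u)
    (N : ℕ) (hN : 1 ≤ N)
    (hbefore : ∀ k < N, a k + u k = 0 ∨ a k + u k = 2) :
    (a N = 0 ∧ u N = -2 →
      (∑' j : ℕ, (a (N + j) + u (N + j)) / 3 ^ (N + j + 1)) ∈
        Set.Ico (-((3 : ℝ) ^ N)⁻¹) 0) ∧
    (a N = 2 ∧ u N = 2 →
      (∑' j : ℕ, (a (N + j) + u (N + j)) / 3 ^ (N + j + 1)) ∈
        Set.Ioc ((3 : ℝ) ^ N)⁻¹ (2 * ((3 : ℝ) ^ N)⁻¹)) := by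
  obtain ⟨hu01, -, hu3, hu4⟩ := hu
  push_neg at hu3 hu4
  have hb : ∀ j : ℕ, -2 ≤ a (N + j) + u (N + j) ∧ a (N + j) + u (N + j) ≤ 4 := by
    intro j
    rcases ha (N + j) with h1 | h1 <;> rcases hu01 (N + j) with h2 | h2 | h2 <;>
      rw [h1, h2] <;> norm_num
  constructor
  · rintro ⟨haN, huN⟩
    obtain ⟨m, hm, hum⟩ := hu4 N huN
    have ht : m - N ≠ 0 := by omega
    have hmt : N + (m - N) = m := by omega
    have h := (key_bounds N (fun j => a (N + j) + u (N + j)) hb (m - N) ht).1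
    simp only [hmt] at h
    apply h
    · show a (N + 0) + u (N + 0) = -2
      norm_num [haN, huN]
    · have h2 : u m ≤ 0 := by
        rcases hu01 m with h2 | h2 | h2 <;> first | (exact absurd h2 hum) | rw [h2] <;> norm_num
      rcases ha m with h1 | h1 <;> rw [h1] <;> linarith
  · rintro ⟨haN, huN⟩
    obtain ⟨m, hm, hum⟩ := hu3 N huN
    have ht : m - N ≠ 0 := by omega
    have hmt : N + (m - N) = m := by omega
    have h := (key_bounds N (fun j => a (N + j) + u (N + j)) hb (m - N) ht).2
    simp only [hmt] at h
    apply h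
    · show a (N + 0) + u (N + 0) = 4
      norm_num [haN, huN]
    · have h2 : 0 ≤ u m := by
        rcases hu01 m with h2 | h2 | h2 <;> first | (exact absurd h2 hum) | rw [h2] <;> norm_num
      rcases ha m with h1 | h1 <;> rw [h1] <;> linarith
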